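/- arXiv:2405.05082 — 2 statements merged into one kernel-verified Lean document; each statement's English description precedes it below -/
import Mathlib

section
/- For every ε with 0 < ε < 1/100 there exists an integer N such that for all n ≥ N and all integers m, p with 5 ≤ m ≤ ε^2·n and m ≤ p ≤ n − 1, one has R_m(p,n) < (5/8)^n · (1 + ε)^n. -/
/-!
Dropping linear independence, `R_m(p,n)` is at most the probability that some `m` of the `p`
rows have a combination with nonzero coefficients that is a `{±1}`-vector, so it suffices to count
the `m × n` sign matrices with this property. For such a matrix fix `r ≤ m` columns spanning its
column space and the signs the combination takes on them. These data pin down a coefficient vector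
that agrees with the original one on the whole column space, and by the Erdős–Littlewood–Offord
inequality each remaining column is then one of at most `2 C(m, ⌊m/2⌋)` sign vectors. This gives
`R_m(p,n) ≤ n^{4m} ρ^{n-m}` with `ρ = 2 C(m, ⌊m/2⌋) / 2^m`, where `ρ ≤ 5/8` for `m ≥ 5` and
`ρ² m ≤ 4`. When `m ≤ √n` the first bound beats the polynomial factor; otherwise the second one
makes `ρ^{n-m}` smaller than any exponential.
-/

open scoped Classical

noncomputable section

/-- The `{±1}`-vector in `ℝ^n` encoded by a Boolean vector. -/
def signVec {n : ℕ} (u : Fin n → Bool) : Fin n → ℝ := fun i => if u i then 1 else -1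

/-- `v` is a `{±1}`-vector: all coordinates lie in `{-1, 1}`. -/
def IsPM {n : ℕ} (v : Fin n → ℝ) : Prop := ∀ i, v i = 1 ∨ v i = -1

/-- The real span of the `{±1}`-vectors encoded by `W` contains a `{±1}`-vector different
from `±(W j)` for all `j`. -/
def KSOEvent {p n : ℕ} (W : Fin p → Fin n → Bool) : Prop :=
  ∃ x : Fin n → ℝ,
    x ∈ Submodule.span ℝ (Set.range fun j => signVec (W j)) ∧ IsPM x ∧
    ∀ j, x ≠ signVec (W j) ∧ x ≠ -signVec (W j)

/-- `ℙ(p, n)`: the probability that the real span of `p` uniformly random `{±1}`-vectors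
in `ℝ^n` contains a `{±1}`-vector different from `±v_1, …, ±v_p`. -/
def probKSO (p n : ℕ) : ℝ :=
  ((Finset.univ.filter fun W : Fin p → Fin n → Bool => KSOEvent W).card : ℝ) / 2 ^ (p * n)

/-- Some three of the vectors encoded by `W` have a real linear combination that is a
`{±1}`-vector different from `±` those three vectors. -/
def P3Event {p n : ℕ} (W : Fin p → Fin n → Bool) : Prop :=
  ∃ j₁ j₂ j₃ : Fin p, j₁ ≠ j₂ ∧ j₁ ≠ j₃ ∧ j₂ ≠ j₃ ∧
    ∃ a b c : ℝ, ∃ x : Fin n → ℝ,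
      x = a • signVec (W j₁) + b • signVec (W j₂) + c • signVec (W j₃) ∧ IsPM x ∧
      (x ≠ signVec (W j₁) ∧ x ≠ -signVec (W j₁)) ∧
      (x ≠ signVec (W j₂) ∧ x ≠ -signVec (W j₂)) ∧
      (x ≠ signVec (W j₃) ∧ x ≠ -signVec (W j₃))

/-- `ℙ₃(p, n)`: the probability of `P3Event` for `p` uniformly random `{±1}`-vectors in `ℝ^n`. -/
def probP3 (p n : ℕ) : ℝ :=
  ((Finset.univ.filter fun W : Fin p → Fin n → Bool => P3Event W).card : ℝ) / 2 ^ (p * n)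

/-- Some `m` of the vectors encoded by `W` have a linear combination with all coefficients
nonzero that is a `{±1}`-vector. -/
def PmEvent (m : ℕ) {p n : ℕ} (W : Fin p → Fin n → Bool) : Prop :=
  ∃ j : Fin m → Fin p, Function.Injective j ∧
    ∃ α : Fin m → ℝ, (∀ i, α i ≠ 0) ∧ IsPM (∑ i, α i • signVec (W (j i)))

/-- `ℙ_m(p, n)`: the probability of `PmEvent m` for `p` uniformly random `{±1}`-vectors
in `ℝ^n`. -/
def probPm (m p n : ℕ) : ℝ :=
  ((Finset.univ.filter fun W : Fin p → Fin n → Bool => PmEvent m W).card : ℝ) / 2 ^ (p * n)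

/-- `𝓜_m(p, n)`: the set of `p × n` `{±1}`-matrices (encoded row-wise by Booleans) with
linearly independent rows, some `m` of which have a linear combination with nonzero
coefficients that is a `{±1}`-vector. -/
def MmSet (m p n : ℕ) : Finset (Fin p → Fin n → Bool) :=
  Finset.univ.filter fun M =>
    (LinearIndependent ℝ fun i => signVec (M i)) ∧ PmEvent m M

/-- `R_m(p, n) = |𝓜_m(p, n)| / 2^(p n)`. -/
def Rm (m p n : ℕ) : ℝ := ((MmSet m p n).card : ℝ) / 2 ^ (p * n)

/-- `ℙ_{p,n}`: the probability that a uniformly random `p × n` `{±1}`-matrix has rank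
less than `p`, i.e. its rows are linearly dependent over `ℝ`. -/
def probSingular (p n : ℕ) : ℝ :=
  ((Finset.univ.filter fun M : Fin p → Fin n → Bool =>
      ¬ LinearIndependent ℝ fun i => signVec (M i)).card : ℝ) / 2 ^ (p * n)

/-- The vector `(1, b_1, …, b_n) ∈ E_n ⊂ ℝ^{n+1}` encoded by a Boolean vector. -/
def eVec {n : ℕ} (u : Fin n → Bool) : Fin (n + 1) → ℝ := Fin.cons 1 (signVec u)

/-- The number of ordered `n`-tuples of distinct, linearly independent vectors from `E_n`
whose real span contains a `{±1}`-vector of `ℝ^{n+1}` different from `±w_1, …, ±w_n`. -/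
def KSOECard (n : ℕ) : ℕ :=
  (Finset.univ.filter fun W : Fin n → (Fin n → Bool) =>
    Function.Injective W ∧ (LinearIndependent ℝ fun i => eVec (W i)) ∧
    ∃ x : Fin (n + 1) → ℝ,
      x ∈ Submodule.span ℝ (Set.range fun i => eVec (W i)) ∧ IsPM x ∧
      ∀ i, x ≠ eVec (W i) ∧ x ≠ -eVec (W i)).card

/-- `P(2, n)`: the number of threshold functions of `n` variables. -/
def numThreshold (n : ℕ) : ℕ :=
  (Finset.univ.filter fun f : (Fin n → Bool) → Bool =>
    ∃ a : ℝ, ∃ w : Fin n → ℝ,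
      ∀ x, f x = true ↔ 0 < a + ∑ i, w i * signVec x i).card

open Finset Filter Real Asymptotics

theorem dotProduct_signVec_eq {m : ℕ} (α : Fin m → ℝ) (u : Fin m → Bool) :
    α ⬝ᵥ signVec u =
      2 * ∑ i ∈ {i | u i = decide (0 < α i)}, |α i| - ∑ i, |α i| := by
  rw [sum_filter, mul_sum, ← sum_sub_distrib]
  refine sum_congr rfl fun i _ => ?_
  rcases lt_trichotomy (α i) 0 with h | h | h <;> cases hu : u i <;>
    simp [signVec, hu, h, abs_of_neg, abs_of_pos, h.not_gt, two_mul]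

theorem card_filter_dotProduct_signVec_eq_le {m : ℕ} {α : Fin m → ℝ} (hα : ∀ i, α i ≠ 0)
    (t : ℝ) : #{u : Fin m → Bool | α ⬝ᵥ signVec u = t} ≤ m.choose (m / 2) := by
  set A : (Fin m → Bool) → Finset (Fin m) := fun u => {i | u i = decide (0 < α i)}
  have hA : Function.Injective A := by
    intro u v huv
    funext i
    have := congrArg (i ∈ ·) huv
    simp only [A, mem_filter, mem_univ, true_and, eq_iff_iff] at this
    cases hu : u i <;> cases hv : v i <;> cases h : decide (0 < α i) <;> simp_all
  have hanti : IsAntichain (· ⊆ ·) (SetLike.coe (image A {u | α ⬝ᵥ signVec u = t})) := by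
    rintro _ hs _ ht hne hsub
    simp only [coe_image, coe_filter, mem_univ, true_and, Set.mem_image, Set.mem_ofPred_eq] at hs ht
    obtain ⟨u, hu, rfl⟩ := hs
    obtain ⟨v, hv, rfl⟩ := ht
    have hsum := sum_sdiff hsub (f := fun i => |α i|)
    rw [dotProduct_signVec_eq] at hu hv
    have hpos : 0 < ∑ i ∈ A v \ A u, |α i| :=
      sum_pos (fun i _ => abs_pos.2 (hα i)) (sdiff_nonempty.2 fun h => hne (hsub.antisymm h))
    linarith
  simpa [card_image_of_injective _ hA] using hanti.sperner

def pmLevelSet {m : ℕ} (α : Fin m → ℝ) : Finset (Fin m → Bool) :=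
  {x | α ⬝ᵥ signVec x = 1 ∨ α ⬝ᵥ signVec x = -1}

theorem card_pmLevelSet_le {m : ℕ} {α : Fin m → ℝ} (hα : ∀ i, α i ≠ 0) :
    #(pmLevelSet α) ≤ 2 * m.choose (m / 2) := by
  rw [pmLevelSet, filter_or, two_mul]
  exact (card_union_le _ _).trans (add_le_add (card_filter_dotProduct_signVec_eq_le hα 1)
    (card_filter_dotProduct_signVec_eq_le hα (-1)))

theorem Nat.choose_succ_half_le (m : ℕ) :
    (m + 1).choose ((m + 1) / 2) ≤ 2 * m.choose (m / 2) := by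
  cases h : (m + 1) / 2 with
  | zero =>
    have := Nat.choose_pos (Nat.div_le_self m 2)
    rw [Nat.choose_zero_right]
    omega
  | succ j =>
    have := Nat.choose_le_middle j m
    have := Nat.choose_le_middle (j + 1) m
    rw [Nat.choose_succ_succ']
    omega

theorem Nat.centralBinom_sq_mul_le (k : ℕ) : k.centralBinom ^ 2 * (2 * k + 1) ≤ 16 ^ k := by
  induction k with
  | zero => simp
  | succ k ih =>
    have hrec := Nat.succ_mul_centralBinom_succ k
    have key : (k + 1) ^ 2 * ((k + 1).centralBinom ^ 2 * (2 * (k + 1) + 1))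
        ≤ (k + 1) ^ 2 * 16 ^ (k + 1) :=
      calc (k + 1) ^ 2 * ((k + 1).centralBinom ^ 2 * (2 * (k + 1) + 1))
          = 4 * (2 * k + 1) * (2 * k + 3) * (k.centralBinom ^ 2 * (2 * k + 1)) := by
            rw [← mul_assoc, ← mul_pow, hrec]; ring
        _ ≤ 16 * (k + 1) ^ 2 * 16 ^ k := Nat.mul_le_mul (by nlinarith) ih
        _ = (k + 1) ^ 2 * 16 ^ (k + 1) := by ring
    exact Nat.le_of_mul_le_mul_left key (by positivity)

theorem Nat.choose_half_sq_mul_le (m : ℕ) : m.choose (m / 2) ^ 2 * m ≤ 4 ^ m := by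
  obtain ⟨k, rfl | rfl⟩ := Nat.even_or_odd' m
  · have h := Nat.centralBinom_sq_mul_le k
    rw [show 2 * k / 2 = k by omega, ← Nat.centralBinom_eq_two_mul_choose, pow_mul]
    calc k.centralBinom ^ 2 * (2 * k) ≤ k.centralBinom ^ 2 * (2 * k + 1) := by gcongr; omega
      _ ≤ (4 ^ 2) ^ k := h
  · have h := Nat.centralBinom_sq_mul_le k
    have hle := Nat.choose_succ_half_le (2 * k)
    rw [show 2 * k / 2 = k by omega, ← Nat.centralBinom_eq_two_mul_choose] at hle
    calc (2 * k + 1).choose ((2 * k + 1) / 2) ^ 2 * (2 * k + 1)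
        ≤ (2 * k.centralBinom) ^ 2 * (2 * k + 1) := by gcongr
      _ = 4 * (k.centralBinom ^ 2 * (2 * k + 1)) := by ring
      _ ≤ 4 * 16 ^ k := by gcongr
      _ = 4 ^ (2 * k + 1) := by rw [pow_succ, pow_mul]; ring

/-- The bound of `card_pmLevelSet_le` on the proportion of sign vectors in `pmLevelSet α`. -/
def centralRatio (m : ℕ) : ℝ := 2 * m.choose (m / 2) / 2 ^ m

theorem centralRatio_pos (m : ℕ) : 0 < centralRatio m := by
  have := Nat.choose_pos (Nat.div_le_self m 2)
  unfold centralRatio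
  positivity

theorem centralRatio_antitone : Antitone centralRatio := by
  refine antitone_nat_of_succ_le fun m => ?_
  have h : ((m + 1).choose ((m + 1) / 2) : ℝ) ≤ 2 * m.choose (m / 2) := by
    exact_mod_cast Nat.choose_succ_half_le m
  rw [centralRatio, centralRatio, pow_succ, div_le_div_iff₀ (by positivity) (by positivity)]
  nlinarith [pow_pos (two_pos : (0:ℝ) < 2) m]

theorem centralRatio_le_one {m : ℕ} (hm : 1 ≤ m) : centralRatio m ≤ 1 :=
  (centralRatio_antitone hm).trans (by norm_num [centralRatio])

theorem centralRatio_le_five_eighths {m : ℕ} (hm : 5 ≤ m) : centralRatio m ≤ 5 / 8 :=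
  (centralRatio_antitone hm).trans (by norm_num [centralRatio, Nat.choose])

theorem centralRatio_sq_mul_le (m : ℕ) : centralRatio m ^ 2 * m ≤ 4 := by
  have h : ((m.choose (m / 2) ^ 2 * m : ℕ) : ℝ) ≤ (4 : ℝ) ^ m := by
    exact_mod_cast Nat.choose_half_sq_mul_le m
  have h4 : (2 : ℝ) ^ m * 2 ^ m = 4 ^ m := by rw [← mul_pow]; norm_num
  push_cast at h
  rw [centralRatio, div_pow, div_mul_eq_mul_div, div_le_iff₀ (by positivity), sq (2 ^ m : ℝ),
    h4]
  linarith

theorem card_filter_comp_le {ι κ X : Type*} [Fintype ι] [DecidableEq ι] [Fintype κ]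
    [DecidableEq κ] [Fintype X]
    {j : ι → κ} (hj : Function.Injective j) (P : (ι → X) → Prop) (T : (ι → X) → Finset X)
    {L : ℕ} (hT : ∀ a, #(T a) ≤ L) :
    #{W : κ → X | P (W ∘ j) ∧ ∀ k ∉ Set.range j, W k ∈ T (W ∘ j)}
      ≤ #{a | P a} * L ^ (Fintype.card κ - Fintype.card ι) := by
  let split (W : κ → X) : Σ _ : ι → X, {k // k ∉ Set.range j} → X :=
    ⟨W ∘ j, fun k => W k⟩
  have hsplit : Function.Injective split := by
    intro W W' h
    simp only [split, Sigma.mk.injEq] at h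
    obtain ⟨h₁, h₂⟩ := h
    funext k
    by_cases hk : k ∈ Set.range j
    · obtain ⟨i, rfl⟩ := hk
      exact congrFun h₁ i
    · exact congrFun (eq_of_heq h₂) ⟨k, hk⟩
  calc #{W : κ → X | P (W ∘ j) ∧ ∀ k ∉ Set.range j, W k ∈ T (W ∘ j)}
      ≤ #((univ.filter P).sigma fun a => Fintype.piFinset fun _ => T a) := by
        refine card_le_card_of_injOn split ?_ hsplit.injOn
        intro W hW
        simp only [coe_filter, mem_univ, true_and, Set.mem_ofPred_eq] at hW
        simp only [coe_sigma, coe_filter, mem_univ, true_and, Set.mem_sigma_iff,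
          Set.mem_ofPred_eq, split, Fintype.coe_piFinset, Set.mem_pi]
        exact ⟨hW.1, fun k _ => hW.2 k k.2⟩
    _ = ∑ a ∈ univ.filter P, #(T a) ^ (Fintype.card κ - Fintype.card ι) := by
        rw [card_sigma]
        simp only [Fintype.card_piFinset, prod_const, card_univ]
        have : Fintype.card {k // k ∉ Set.range j} = Fintype.card κ - Fintype.card ι := by
          convert Fintype.card_subtype_compl (· ∈ Set.range j)
          exact (Set.card_range_of_injective hj).symm
        simp only [this]
    _ ≤ ∑ a ∈ univ.filter P, L ^ (Fintype.card κ - Fintype.card ι) := by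
        gcongr with a
        exact hT a
    _ = #{a | P a} * L ^ (Fintype.card κ - Fintype.card ι) := by
        rw [sum_const, smul_eq_mul]

theorem exists_injective_span_eq {K V ι : Type*} [DivisionRing K] [AddCommGroup V] [Module K V]
    [FiniteDimensional K V] (v : ι → V) :
    ∃ r ≤ Module.finrank K V, ∃ κ : Fin r → ι, Function.Injective κ ∧
      Submodule.span K (Set.range (v ∘ κ)) = Submodule.span K (Set.range v) := by
  obtain ⟨s, a, ha, hspan, hli⟩ := exists_linearIndependent' K v
  have := hli.finite
  let _ := Fintype.ofFinite s
  let e := Fintype.equivFin s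
  refine ⟨Fintype.card s, hli.fintype_card_le_finrank, a ∘ e.symm, ha.comp e.symm.injective, ?_⟩
  rw [← hspan, ← Function.comp_assoc, e.symm.surjective.range_comp]

theorem dotProduct_eq_of_span_comp_eq {m r n : ℕ} {v : Fin n → Fin m → ℝ} {κ : Fin r → Fin n}
    (hκ : Submodule.span ℝ (Set.range (v ∘ κ)) = Submodule.span ℝ (Set.range v))
    {α β : Fin m → ℝ} (h : ∀ l, α ⬝ᵥ v (κ l) = β ⬝ᵥ v (κ l)) (k : Fin n) :
    α ⬝ᵥ v k = β ⬝ᵥ v k := by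
  have hk : v k ∈ Submodule.span ℝ (Set.range (v ∘ κ)) := hκ ▸ Submodule.subset_span ⟨k, rfl⟩
  refine LinearMap.eqOn_span' (f := dotProductBilin ℝ ℝ α) (g := dotProductBilin ℝ ℝ β) ?_ hk
  rintro _ ⟨l, rfl⟩
  exact h l

def HasPMCombination {m n : ℕ} (V : Fin m → Fin n → Bool) : Prop :=
  ∃ α : Fin m → ℝ, (∀ i, α i ≠ 0) ∧ IsPM (∑ i, α i • signVec (V i))

theorem hasPMCombination_iff {m n : ℕ} (V : Fin m → Fin n → Bool) :
    HasPMCombination V ↔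
      ∃ α : Fin m → ℝ, (∀ i, α i ≠ 0) ∧ ∀ k, (fun i => V i k) ∈ pmLevelSet α := by
  have hcol (α : Fin m → ℝ) (k : Fin n) :
      (∑ i, α i • signVec (V i)) k = α ⬝ᵥ signVec (fun i => V i k) := by
    simp [dotProduct, signVec]
  simp [HasPMCombination, IsPM, pmLevelSet, hcol]

/-- A nonzero coefficient vector whose products with the vectors `a l` are the signs `s l`;
junk value `1` if there is none. -/
def solveCoeffs {r m : ℕ} (a : Fin r → Fin m → Bool) (s : Fin r → Bool) : Fin m → ℝ :=
  if h : ∃ α : Fin m → ℝ, (∀ i, α i ≠ 0) ∧ ∀ l, α ⬝ᵥ signVec (a l) = signVec s l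
  then h.choose else 1

theorem solveCoeffs_ne_zero {r m : ℕ} (a : Fin r → Fin m → Bool) (s : Fin r → Bool) (i : Fin m) :
    solveCoeffs a s i ≠ 0 := by
  unfold solveCoeffs
  split_ifs with h
  · exact h.choose_spec.1 i
  · exact one_ne_zero

theorem solveCoeffs_dotProduct {r m : ℕ} {a : Fin r → Fin m → Bool} {s : Fin r → Bool}
    (h : ∃ α : Fin m → ℝ, (∀ i, α i ≠ 0) ∧ ∀ l, α ⬝ᵥ signVec (a l) = signVec s l) (l : Fin r) :
    solveCoeffs a s ⬝ᵥ signVec (a l) = signVec s l := by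
  rw [solveCoeffs, dif_pos h]
  exact h.choose_spec.2 l

theorem exists_injective_forall_mem_pmLevelSet_solveCoeffs {m n : ℕ} {c : Fin n → Fin m → Bool}
    {α : Fin m → ℝ} (hα : ∀ i, α i ≠ 0) (hc : ∀ k, c k ∈ pmLevelSet α) :
    ∃ r ≤ m, ∃ κ : Fin r → Fin n, Function.Injective κ ∧
      ∃ s : Fin r → Bool, ∀ k, c k ∈ pmLevelSet (solveCoeffs (c ∘ κ) s) := by
  obtain ⟨r, hr, κ, hκ, hspan⟩ := exists_injective_span_eq (K := ℝ) fun k => signVec (c k)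
  rw [Module.finrank_fin_fun] at hr
  let s l := decide (α ⬝ᵥ signVec (c (κ l)) = 1)
  have hαs (l : Fin r) : α ⬝ᵥ signVec (c (κ l)) = signVec s l := by
    rcases (mem_filter.1 (hc (κ l))).2 with h | h <;> simp [signVec, s, h]
  have hsol := solveCoeffs_dotProduct (a := c ∘ κ) ⟨α, hα, hαs⟩
  refine ⟨r, hr, κ, hκ, s, fun k => ?_⟩
  have := dotProduct_eq_of_span_comp_eq hspan (fun l => (hsol l).trans (hαs l).symm) k
  simpa [pmLevelSet, this] using hc k

theorem card_hasPMCombination_le (m n : ℕ) :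
    #{V : Fin m → Fin n → Bool | HasPMCombination V}
      ≤ ∑ r ∈ range (m + 1), n ^ r * 2 ^ r * ((2 ^ m) ^ r * (2 * m.choose (m / 2)) ^ (n - r)) := by
  let cover (r : ℕ) : Finset (Fin n → Fin m → Bool) :=
    ((univ.filter fun κ : Fin r → Fin n => Function.Injective κ) ×ˢ univ).biUnion
      fun κs => {c | ∀ k ∉ Set.range κs.1, c k ∈ pmLevelSet (solveCoeffs (c ∘ κs.1) κs.2)}
  have hcover : #{V : Fin m → Fin n → Bool | HasPMCombination V}
      ≤ #((range (m + 1)).biUnion cover) := by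
    -- `Function.swap V` is the family of columns of `V`.
    refine card_le_card_of_injOn Function.swap (fun V hV => ?_)
      Function.swap_bijective.injective.injOn
    obtain ⟨α, hα, hV⟩ := (hasPMCombination_iff V).1 (mem_filter.1 hV).2
    obtain ⟨r, hr, κ, hκ, s, hs⟩ := exists_injective_forall_mem_pmLevelSet_solveCoeffs hα hV
    exact mem_coe.2 <| mem_biUnion.2 ⟨r, mem_range.2 (by omega),
      mem_biUnion.2 ⟨(κ, s), by simp [hκ], by simp [hs]⟩⟩
  refine hcover.trans (card_biUnion_le.trans (sum_le_sum fun r _ => ?_))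
  calc #(cover r)
      ≤ ∑ κs ∈ (univ.filter fun κ : Fin r → Fin n => Function.Injective κ) ×ˢ univ,
          (2 ^ m) ^ r * (2 * m.choose (m / 2)) ^ (n - r) := by
        refine card_biUnion_le.trans (sum_le_sum fun κs hκs => ?_)
        have := card_filter_comp_le (mem_filter.1 (mem_product.1 hκs).1).2 (fun _ => True)
          (fun a : Fin r → Fin m → Bool => pmLevelSet (solveCoeffs a κs.2))
          fun a => card_pmLevelSet_le (solveCoeffs_ne_zero a κs.2)
        simpa using this
    _ ≤ n ^ r * 2 ^ r * ((2 ^ m) ^ r * (2 * m.choose (m / 2)) ^ (n - r)) := by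
        rw [sum_const, smul_eq_mul, card_product]
        gcongr
        · exact (card_le_univ _).trans_eq (by simp)
        · simp

theorem card_pmEvent_le (m p n : ℕ) :
    #{W : Fin p → Fin n → Bool | PmEvent m W}
      ≤ p ^ m * (#{V : Fin m → Fin n → Bool | HasPMCombination V} * (2 ^ n) ^ (p - m)) := by
  calc #{W : Fin p → Fin n → Bool | PmEvent m W}
      ≤ #((univ.filter fun j : Fin m → Fin p => Function.Injective j).biUnion fun j =>
          {W : Fin p → Fin n → Bool | HasPMCombination (W ∘ j) ∧
            ∀ k ∉ Set.range j, W k ∈ (univ : Finset (Fin n → Bool))}) := by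
        refine card_le_card fun W hW => ?_
        obtain ⟨j, hj, hW⟩ := (mem_filter.1 hW).2
        simp only [mem_biUnion, mem_filter, mem_univ, true_and]
        exact ⟨j, hj, hW, fun _ _ => trivial⟩
    _ ≤ ∑ j ∈ univ.filter fun j : Fin m → Fin p => Function.Injective j,
          #{V : Fin m → Fin n → Bool | HasPMCombination V} * (2 ^ n) ^ (p - m) := by
        refine card_biUnion_le.trans (sum_le_sum fun j hj => ?_)
        have := card_filter_comp_le (mem_filter.1 hj).2 (HasPMCombination (n := n))
          (fun _ => univ) fun _ => (by simp : #(univ : Finset (Fin n → Bool)) ≤ 2 ^ n)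
        simpa using this
    _ ≤ p ^ m * (#{V : Fin m → Fin n → Bool | HasPMCombination V} * (2 ^ n) ^ (p - m)) := by
        rw [sum_const, smul_eq_mul]
        gcongr
        exact (card_le_univ _).trans_eq (by simp)

theorem card_hasPMCombination_div_le {m n : ℕ} (hm : 1 ≤ m) (hmn : m ≤ n) :
    (#{V : Fin m → Fin n → Bool | HasPMCombination V} : ℝ) / 2 ^ (m * n)
      ≤ (m + 1) * ((2 * n) ^ m * centralRatio m ^ (n - m)) := by
  have hterm (r : ℕ) (hr : r ≤ m) :
      ((n ^ r * 2 ^ r * ((2 ^ m) ^ r * (2 * m.choose (m / 2)) ^ (n - r)) : ℕ) : ℝ) / 2 ^ (m * n)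
        = (2 * n) ^ r * centralRatio m ^ (n - r) := by
    rw [centralRatio, div_pow, show m * n = m * r + m * (n - r) by rw [← mul_add]; congr; omega,
      pow_add, pow_mul, pow_mul]
    push_cast
    field_simp
    ring
  have hmono (r : ℕ) (hr : r ≤ m) :
      (2 * n : ℝ) ^ r * centralRatio m ^ (n - r) ≤ (2 * n) ^ m * centralRatio m ^ (n - m) := by
    have h1 : (1 : ℝ) ≤ 2 * n := by norm_cast; omega
    exact mul_le_mul (pow_le_pow_right₀ h1 hr)
      (pow_le_pow_of_le_one (centralRatio_pos m).le (centralRatio_le_one hm) (by omega))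
      (pow_nonneg (centralRatio_pos m).le _) (by positivity)
  calc (#{V : Fin m → Fin n → Bool | HasPMCombination V} : ℝ) / 2 ^ (m * n)
      ≤ (∑ r ∈ range (m + 1),
          ((n ^ r * 2 ^ r * ((2 ^ m) ^ r * (2 * m.choose (m / 2)) ^ (n - r)) : ℕ) : ℝ))
          / 2 ^ (m * n) := by
        gcongr
        exact_mod_cast card_hasPMCombination_le m n
    _ ≤ ∑ r ∈ range (m + 1), (2 * n : ℝ) ^ m * centralRatio m ^ (n - m) := by
        rw [sum_div]
        refine sum_le_sum fun r hr => ?_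
        rw [hterm r (by simp at hr; omega)]
        exact hmono r (by simp at hr; omega)
    _ = (m + 1) * ((2 * n) ^ m * centralRatio m ^ (n - m)) := by simp

theorem Rm_le {m p n : ℕ} (hm : 1 ≤ m) (hmp : m ≤ p) (hpn : p < n) :
    Rm m p n ≤ n ^ (4 * m) * centralRatio m ^ (n - m) := by
  set Q := #{V : Fin m → Fin n → Bool | HasPMCombination V}
  have hMm : (#(MmSet m p n) : ℝ) ≤ p ^ m * (Q * (2 ^ n) ^ (p - m)) := by
    have hsub : MmSet m p n ⊆ univ.filter (PmEvent m) :=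
      monotone_filter_right _ fun _ _ h => h.2
    exact_mod_cast (card_le_card hsub).trans (card_pmEvent_le m p n)
  have hpoly : (p : ℝ) ^ m * ((m + 1) * (2 * n) ^ m) ≤ n ^ (4 * m) := by
    have hn : (2 : ℝ) ≤ n := by norm_cast; omega
    have : ((m : ℝ) + 1) ≤ n ^ m := by
      calc ((m : ℝ) + 1) ≤ 2 ^ m := by exact_mod_cast Nat.lt_two_pow_self
        _ ≤ n ^ m := by gcongr
    calc (p : ℝ) ^ m * ((m + 1) * (2 * n) ^ m) ≤ n ^ m * (n ^ m * (n * n) ^ m) := by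
          gcongr
      _ = n ^ (4 * m) := by ring
  calc Rm m p n ≤ p ^ m * (Q * (2 ^ n) ^ (p - m)) / 2 ^ (p * n) := by
        rw [Rm]; gcongr
    _ = p ^ m * (Q / 2 ^ (m * n)) := by
        rw [show p * n = m * n + n * (p - m) by rw [mul_comm n, ← add_mul]; congr; omega,
          pow_add, ← pow_mul]
        field_simp
    _ ≤ p ^ m * ((m + 1) * ((2 * n) ^ m * centralRatio m ^ (n - m))) := by
        gcongr
        exact card_hasPMCombination_div_le hm (by omega)
    _ ≤ n ^ (4 * m) * centralRatio m ^ (n - m) := by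
        rw [← mul_assoc (m + 1 : ℝ), ← mul_assoc]
        have := centralRatio_pos m
        gcongr

theorem eventually_sqrt_mul_log_lt {c : ℝ} (hc : 0 < c) :
    ∀ᶠ n : ℕ in atTop, √n * (4 * log n + 1) < n * c := by
  have hlog : log =o[atTop] fun x => √x := by
    simpa only [← sqrt_eq_rpow] using isLittleO_log_rpow_atTop (r := 1 / 2) (by norm_num)
  have hone : (fun _ => (1 : ℝ)) =o[atTop] fun x => √x :=
    (isLittleO_one_left_iff ℝ).2 (tendsto_norm_atTop_atTop.comp tendsto_sqrt_atTop)
  have hsq : (fun x => √x * √x) =ᶠ[atTop] id :=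
    (eventually_ge_atTop 0).mono fun x hx => mul_self_sqrt hx
  have ho : (fun x => √x * (4 * log x + 1)) =o[atTop] id :=
    ((isBigO_refl _ _).mul_isLittleO ((hlog.const_mul_left 4).add hone)).congr' .rfl hsq
  refine tendsto_natCast_atTop_atTop.eventually (p := fun x : ℝ => √x * (4 * log x + 1) < x * c) ?_
  filter_upwards [ho.def (half_pos hc), eventually_gt_atTop 0] with x hx hx0
  rw [Real.norm_eq_abs, Real.norm_eq_abs, id, abs_of_pos hx0] at hx
  nlinarith [le_abs_self (√x * (4 * log x + 1))]

theorem pow_mul_pow_sub_lt {ε ρ : ℝ} {n m : ℕ} (hε0 : 0 < ε) (hε : ε < 1 / 100)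
    (hsmall : √n * (4 * log n + 1) < n * log (1 + ε)) (hlog : 10 ≤ log n)
    (hm : (m : ℝ) ≤ ε ^ 2 * n) (hρ0 : 0 < ρ) (hρ : ρ ≤ 5 / 8) (hρm : ρ ^ 2 * m ≤ 4) :
    (n : ℝ) ^ (4 * m) * ρ ^ (n - m) < (5 / 8) ^ n * (1 + ε) ^ n := by
  have hn : (0 : ℝ) < n := Nat.cast_pos.2 <| Nat.pos_of_ne_zero fun h => by norm_num [h] at hlog
  have hεn : ε ^ 2 * n ≤ n / 10000 := by
    have : ε ^ 2 ≤ 1 / 10000 := by nlinarith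
    nlinarith
  have hmn : (m : ℝ) ≤ n := by linarith
  have hε1 : 0 < log (1 + ε) := log_pos (by linarith)
  have h58 : -(3 / 5) ≤ log (5 / 8) := by
    have := log_le_sub_one_of_pos (by norm_num : (0 : ℝ) < 8 / 5)
    rw [show (5 / 8 : ℝ) = (8 / 5)⁻¹ by norm_num, log_inv]
    linarith
  rw [← log_lt_log_iff (by positivity) (by positivity), log_mul (by positivity) (by positivity),
    log_mul (by positivity) (by positivity), log_pow, log_pow, log_pow, log_pow,
    Nat.cast_sub (by exact_mod_cast hmn)]
  push_cast
  rcases le_or_gt ((m : ℝ) ^ 2) n with hsq | hsq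
  · have hm_sqrt : (m : ℝ) ≤ √n := le_sqrt_of_sq_le hsq
    have h1 : (n - m) * log ρ ≤ (n - m) * log (5 / 8) :=
      mul_le_mul_of_nonneg_left (log_le_log hρ0 hρ) (by linarith)
    have h2 : m * (4 * log n + 1) ≤ √n * (4 * log n + 1) :=
      mul_le_mul_of_nonneg_right hm_sqrt (by linarith)
    have h3 : -(3 / 5) * m ≤ m * log (5 / 8) := by nlinarith
    linarith
  · have hm0 : (0 : ℝ) < m := by nlinarith
    have hρ2 : 2 * log ρ + log m ≤ 2 * log 2 := by
      have := log_le_log (by positivity) hρm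
      rwa [log_mul (by positivity) (by positivity), log_pow, show (4 : ℝ) = 2 ^ 2 by norm_num,
        log_pow, Nat.cast_ofNat] at this
    have hnm : log n < 2 * log m := by
      have := log_lt_log hn hsq
      rwa [log_pow, Nat.cast_ofNat] at this
    have h1 : (n - m) * log ρ ≤ (n - m) * (log 2 - log n / 4) :=
      mul_le_mul_of_nonneg_left (by linarith) (by linarith)
    have hm' : (m : ℝ) ≤ n / 10000 := hm.trans hεn
    have h2 : m * log n ≤ n / 10000 * log n := mul_le_mul_of_nonneg_right hm' (by linarith)
    have h3 : 10 * n ≤ n * log n := by nlinarith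
    have h4 : n * log 2 ≤ 7 / 10 * n := by nlinarith [log_two_lt_d9]
    have h5 : 0 ≤ m * log 2 := by positivity
    have h6 : -(3 / 5) * n ≤ n * log (5 / 8) := by nlinarith
    have h7 : 0 < n * log (1 + ε) := by positivity
    linarith

/-- for every `0 < ε < 1/100` there is `N` such that for all `n ≥ N`,
`5 ≤ m ≤ ε² n` and `m ≤ p ≤ n - 1`, `R_m(p,n) < (5/8)^n (1+ε)^n`. -/
theorem stmt8 :
    ∀ ε : ℝ, 0 < ε → ε < 1 / 100 →
      ∃ N : ℕ, ∀ n ≥ N, ∀ m p : ℕ,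
        5 ≤ m → (m : ℝ) ≤ ε ^ 2 * n → m ≤ p → p + 1 ≤ n →
        Rm m p n < (5 / 8) ^ n * (1 + ε) ^ n := by
  intro ε hε0 hε1
  have hlog_large : ∀ᶠ n : ℕ in atTop, (10 : ℝ) ≤ log n :=
    (tendsto_log_atTop.comp tendsto_natCast_atTop_atTop).eventually_ge_atTop 10
  obtain ⟨N, hN⟩ := ((eventually_sqrt_mul_log_lt (log_pos (by linarith : (1 : ℝ) < 1 + ε))).and
    hlog_large).exists_forall_of_atTop
  refine ⟨N, fun n hn m p hm5 hmε hmp hpn => ?_⟩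
  obtain ⟨hsmall, hlog⟩ := hN n hn
  calc Rm m p n ≤ n ^ (4 * m) * centralRatio m ^ (n - m) := Rm_le (by omega) hmp (by omega)
    _ < (5 / 8) ^ n * (1 + ε) ^ n :=
      pow_mul_pow_sub_lt hε0 hε1 hsmall hlog hmε (centralRatio_pos m)
        (centralRatio_le_five_eighths hm5) (centralRatio_sq_mul_le m)
end
end

section
/- For all integers m, p, n with 1 ≤ m ≤ p ≤ n and m + 1 ≤ n, one has R_m(p,n) ≤ C(p,m) · C(n, m+1) · R_m(m, m+1), where C(p,m) and C(n, m+1) are binomial coefficients. -/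
open scoped Classical

noncomputable section

/-! A matrix in `𝓜_m(p, n)` has `m` rows admitting a `{±1}`-valued combination with nonzero
coefficients. These rows are linearly independent, so some `m` of the columns already keep them
independent, and so does any `m + 1` columns containing those. Sorting the chosen rows and
columns, the `m × (m + 1)` submatrix they cut out lies in `𝓜_m(m, m + 1)`. A union bound over the
`C(p, m) · C(n, m + 1)` increasing choices of rows and columns, each of which constrains only
`m (m + 1)` of the `p n` entries, gives the inequality. -/

open Finset Function

theorem card_filter_strictMono_fin (k n : ℕ) :
    #{s : Fin k → Fin n | StrictMono s} = n.choose k := by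
  rw [show n.choose k = #(powersetCard k (univ : Finset (Fin n))) by simp]
  refine card_nbij (fun s => univ.image s) (fun s hs => ?_) (fun s₁ hs₁ s₂ hs₂ h => ?_)
    (fun S hS => ?_)
  · replace hs : StrictMono s := (mem_filter.1 hs).2
    exact mem_powersetCard.2 ⟨subset_univ _, by simp [card_image_of_injective _ hs.injective]⟩
  · replace hs₁ : StrictMono s₁ := (mem_filter.1 hs₁).2
    replace hs₂ : StrictMono s₂ := (mem_filter.1 hs₂).2
    replace h : univ.image s₁ = univ.image s₂ := h
    have hc : #(univ.image s₁) = k := by simp [card_image_of_injective _ hs₁.injective]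
    exact (orderEmbOfFin_unique hc (fun x => mem_image_of_mem s₁ (mem_univ x)) hs₁).trans
      (orderEmbOfFin_unique hc (fun x => h ▸ mem_image_of_mem s₂ (mem_univ x)) hs₂).symm
  · have hc : #S = k := (mem_powersetCard.1 hS).2
    exact ⟨S.orderEmbOfFin hc, by simpa using (S.orderEmbOfFin hc).strictMono,
      image_orderEmbOfFin_univ S hc⟩

theorem Fintype.card_subtype_comp_of_injective {ι κ γ : Type*} [Fintype ι] [Fintype κ]
    [Fintype γ] {f : κ → ι} (hf : Injective f) (P : (κ → γ) → Prop) :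
    Fintype.card {g : ι → γ // P (g ∘ f)}
      = Fintype.card {h : κ → γ // P h} * Fintype.card γ ^ (Fintype.card ι - Fintype.card κ) := by
  let e : κ ⊕ ((Set.range f)ᶜ : Set ι) ≃ ι :=
    (Equiv.sumCongr (Equiv.ofInjective f hf) (Equiv.refl _)).trans (Equiv.Set.sumCompl _)
  let E : (ι → γ) ≃ (κ → γ) × (↥(Set.range f)ᶜ → γ) :=
    (e.symm.arrowCongr (Equiv.refl γ)).trans (Equiv.sumArrowEquivProdArrow _ _ _)
  have hE : ∀ g, (E g).1 = g ∘ f := fun g => by ext k; simp [E, e]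
  rw [Fintype.card_congr (E.subtypeEquiv (p := fun g => P (g ∘ f)) (q := fun q => P q.1)
      (fun g => by rw [hE])),
    Fintype.card_congr Equiv.prodSubtypeFstEquivSubtypeProd, Fintype.card_prod,
    Fintype.card_fun, Fintype.card_compl_set, Set.card_range_of_injective hf]

theorem Fintype.card_subtype_submatrix {α β α' β' γ : Type*} [Fintype α] [Fintype β]
    [Fintype α'] [Fintype β'] [Fintype γ] {s : α' → α} {t : β' → β} (hs : Injective s)
    (ht : Injective t) (P : (α' → β' → γ) → Prop) :
    Fintype.card {M : α → β → γ // P fun i k => M (s i) (t k)}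
      = Fintype.card {N : α' → β' → γ // P N} *
        Fintype.card γ ^ (Fintype.card α * Fintype.card β - Fintype.card α' * Fintype.card β') := by
  calc Fintype.card {M : α → β → γ // P fun i k => M (s i) (t k)}
      = Fintype.card {g : α × β → γ // P (curry (g ∘ Prod.map s t))} :=
        Fintype.card_congr ((Equiv.curry α β γ).symm.subtypeEquiv fun _ => by rfl)
    _ = Fintype.card {h : α' × β' → γ // P (curry h)} *
          Fintype.card γ ^ (Fintype.card (α × β) - Fintype.card (α' × β')) :=
        by convert Fintype.card_subtype_comp_of_injective (hs.prodMap ht) fun h => P (curry h)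
    _ = _ := by
        rw [Fintype.card_prod, Fintype.card_prod, Fintype.card_congr
          ((Equiv.curry α' β' γ).subtypeEquiv (p := fun h => P (curry h)) (q := P)
            fun _ => Iff.rfl)]

section LinearIndependent

variable {K ι κ : Type*}

theorem LinearIndependent.restrict_of_range_subset [Semiring K] {κ₀ κ₁ : Type*}
    {u : ι → κ → K} {t₀ : κ₀ → κ} {t : κ₁ → κ} (h : Set.range t₀ ⊆ Set.range t)
    (h₀ : LinearIndependent K fun i k => u i (t₀ k)) :
    LinearIndependent K fun i k => u i (t k) := by
  choose g hg using fun k => h (Set.mem_range_self (f := t₀) k)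
  refine LinearIndependent.of_comp (LinearMap.funLeft K K g) ?_
  convert h₀ using 3 with i k
  simp [LinearMap.funLeft, hg]

variable [Field K] [Fintype ι]

theorem linearIndependent_restrict_of_span_eq_top {u : ι → κ → K} {T : Set κ}
    (hT : Submodule.span K ((fun k i => u i k) '' T) = ⊤) :
    LinearIndependent K fun i (k : T) => u i k := by
  rw [Fintype.linearIndependent_iff]
  intro g hg i
  -- a relation `g` among the restricted rows is a functional killing the spanning columns
  let φ : (ι → K) →ₗ[K] K := ∑ j, g j • LinearMap.proj j
  have hφ : Submodule.span K ((fun k i => u i k) '' T) ≤ LinearMap.ker φ := by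
    rw [Submodule.span_le]
    rintro _ ⟨k, hk, rfl⟩
    simpa [φ] using congrFun hg ⟨k, hk⟩
  simpa [φ, Pi.single_apply] using hφ (hT ▸ Submodule.mem_top : Pi.single i 1 ∈ _)

theorem LinearIndependent.exists_finset_card_le_restrict [Fintype κ] {u : ι → κ → K}
    (hu : LinearIndependent K u) :
    ∃ T : Finset κ, #T ≤ Fintype.card ι ∧ LinearIndependent K fun i (k : T) => u i k := by
  have hspan : Submodule.span K (Set.range fun k i => u i k) = ⊤ := by
    apply Submodule.eq_top_of_finrank_eq
    rw [Module.finrank_fintype_fun_eq_card, ← hu.rank_matrix (M := Matrix.of u),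
      Matrix.rank_eq_finrank_span_cols]
    rfl
  obtain ⟨κ₀, a, ha, hsp, hli⟩ := exists_linearIndependent' K fun k i => u i k
  have : Fintype κ₀ := Fintype.ofInjective a ha
  refine ⟨univ.image a, ?_, linearIndependent_restrict_of_span_eq_top ?_⟩
  · calc #(univ.image a) ≤ Fintype.card κ₀ := card_image_le
      _ ≤ Fintype.card ι := by simpa using hli.fintype_card_le_finrank
  · rw [coe_image, coe_univ, Set.image_univ, ← Set.range_comp, hsp, hspan]

theorem LinearIndependent.exists_strictMono_restrict {n r : ℕ} {u : ι → Fin n → K}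
    (hu : LinearIndependent K u) (hr : Fintype.card ι ≤ r) (hrn : r ≤ n) :
    ∃ t : Fin r → Fin n, StrictMono t ∧ LinearIndependent K fun i k => u i (t k) := by
  obtain ⟨T₀, hT₀, hli⟩ := hu.exists_finset_card_le_restrict
  obtain ⟨T, hT₀T, hT⟩ := exists_superset_card_eq (hT₀.trans hr) (by simpa using hrn)
  refine ⟨T.orderEmbOfFin hT, (T.orderEmbOfFin hT).strictMono,
    hli.restrict_of_range_subset (t₀ := Subtype.val) ?_⟩
  rw [Subtype.range_coe, range_orderEmbOfFin]
  exact_mod_cast hT₀T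

end LinearIndependent

theorem exists_perm_strictMono_comp {α : Type*} [LinearOrder α] {m : ℕ} {j : Fin m → α}
    (hj : Injective j) : ∃ σ : Equiv.Perm (Fin m), StrictMono (j ∘ σ) :=
  ⟨Tuple.sort j,
    (Tuple.monotone_sort j).strictMono_of_injective (hj.comp (Tuple.sort j).injective)⟩

theorem exists_strictMono_submatrix_mem_MmSet {m p n : ℕ} (hmn : m + 1 ≤ n)
    {M : Fin p → Fin n → Bool} (hM : M ∈ MmSet m p n) :
    ∃ s : Fin m → Fin p, StrictMono s ∧ ∃ t : Fin (m + 1) → Fin n, StrictMono t ∧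
      (fun i k => M (s i) (t k)) ∈ MmSet m m (m + 1) := by
  simp only [MmSet, mem_filter, mem_univ, true_and] at hM ⊢
  obtain ⟨hLI, j, hj, α, hα, hPM⟩ := hM
  obtain ⟨σ, hσ⟩ := exists_perm_strictMono_comp hj
  obtain ⟨t, ht, htLI⟩ :=
    (hLI.comp _ hσ.injective).exists_strictMono_restrict (by simp) hmn
  refine ⟨j ∘ σ, hσ, t, ht, htLI, σ.symm, σ.symm.injective, α, hα, fun k => ?_⟩
  simpa [Finset.sum_apply, signVec] using hPM (t k)

theorem card_MmSet_le {m p n : ℕ} (hmn : m + 1 ≤ n) :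
    #(MmSet m p n) ≤
      p.choose m * n.choose (m + 1) * (#(MmSet m m (m + 1)) * 2 ^ (p * n - m * (m + 1))) := by
  let rowSel : Finset (Fin m → Fin p) := {s | StrictMono s}
  let colSel : Finset (Fin (m + 1) → Fin n) := {t | StrictMono t}
  calc #(MmSet m p n)
      ≤ #((rowSel ×ˢ colSel).biUnion fun st =>
          {M : Fin p → Fin n → Bool | (fun i k => M (st.1 i) (st.2 k)) ∈ MmSet m m (m + 1)}) := by
        refine card_le_card fun M hM => ?_
        obtain ⟨s, hs, t, ht, hst⟩ := exists_strictMono_submatrix_mem_MmSet hmn hM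
        simp only [mem_biUnion, mem_product, mem_filter, mem_univ, true_and]
        exact ⟨(s, t), ⟨by simpa [rowSel] using hs, by simpa [colSel] using ht⟩, hst⟩
    _ ≤ ∑ st ∈ rowSel ×ˢ colSel,
          #{M : Fin p → Fin n → Bool | (fun i k => M (st.1 i) (st.2 k)) ∈ MmSet m m (m + 1)} :=
        card_biUnion_le
    _ = ∑ _st ∈ rowSel ×ˢ colSel, #(MmSet m m (m + 1)) * 2 ^ (p * n - m * (m + 1)) := by
        refine sum_congr rfl fun st hst => ?_
        simp only [mem_product, mem_filter, mem_univ, true_and, rowSel, colSel] at hst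
        rw [← Fintype.card_subtype]
        convert Fintype.card_subtype_submatrix (γ := Bool) hst.1.injective hst.2.injective
          (· ∈ MmSet m m (m + 1)) using 2 <;> simp
    _ = _ := by
        rw [sum_const, card_product, card_filter_strictMono_fin, card_filter_strictMono_fin,
          smul_eq_mul]

theorem stmt18_general (m p n : ℕ) (h2 : m ≤ p) (h4 : m + 1 ≤ n) :
    Rm m p n ≤ (p.choose m : ℝ) * (n.choose (m + 1) : ℝ) * Rm m m (m + 1) := by
  have hpow : (2 : ℝ) ^ (p * n) = 2 ^ (p * n - m * (m + 1)) * 2 ^ (m * (m + 1)) := by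
    rw [← pow_add, Nat.sub_add_cancel (Nat.mul_le_mul h2 h4)]
  have hcard := card_MmSet_le (p := p) h4
  rw [Rm, Rm, div_le_iff₀ (by positivity), hpow]
  calc ((#(MmSet m p n) : ℕ) : ℝ)
      ≤ p.choose m * n.choose (m + 1) * (#(MmSet m m (m + 1)) * 2 ^ (p * n - m * (m + 1))) := by
        exact_mod_cast hcard
    _ = _ := by field_simp

/-- for `1 ≤ m ≤ p ≤ n` with `m + 1 ≤ n`,
`R_m(p,n) ≤ C(p,m) C(n,m+1) R_m(m, m+1)`. -/
theorem stmt18 (m p n : ℕ) (h1 : 1 ≤ m) (h2 : m ≤ p) (h3 : p ≤ n) (h4 : m + 1 ≤ n) :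
    Rm m p n ≤ (p.choose m : ℝ) * (n.choose (m + 1) : ℝ) * Rm m m (m + 1) :=
  stmt18_general m p n h2 h4
end
end
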